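/- For every squarefree positive integer q and every real number t, Σ_{ℓ∣q} ∏_{p∣ℓ} [ (1 − p^{−1/2−it})²·(1 − p^{−1/2+it})² / ((1 − p^{−1−2it})·(1 − p^{−1+2it})) ] = 2^{ω(q)} · (ν(q)/q) · ∏_{p∣q} [ (1 − p^{−1/2−it})·(1 − p^{−1/2+it}) / ((1 − p^{−1−2it})·(1 − p^{−1+2it})) ]. (This is the second identity of Lemma 3.4 of the paper, expressing Σ_{ℓ∣q} ζ_ℓ(1+2it)ζ_ℓ(1−2it)/(ζ_ℓ(1/2+it)²ζ_ℓ(1/2−it)²) in closed form.) -/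

import Mathlib

open Finset Complex ArithmeticFunction

/-!
Over a squarefree `q` the divisor sum of `ℓ ↦ ∏_{p ∣ ℓ} f p` factorises as
`∏_{p ∣ q} (1 + f p)`. Writing `a = p^{-1/2-it}` and `b = p^{-1/2+it}`, the local factor is
`(1 - a)²(1 - b)² / ((1 - a²)(1 - b²)) = (1 - a)(1 - b) / ((1 + a)(1 + b))`, so adding `1`
gives `2(1 + ab) / ((1 + a)(1 + b))`, and `ab = 1/p`.
-/

theorem Nat.sum_divisors_prod_primeFactors {R : Type*} [CommSemiring R] {n : ℕ}
    (hn : Squarefree n) (f : ℕ → R) :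
    ∑ d ∈ n.divisors, ∏ p ∈ d.primeFactors, f p = ∏ p ∈ n.primeFactors, (1 + f p) := by
  have h := (IsMultiplicative.prodPrimeFactors f).prodPrimeFactors_add_of_squarefree
    isMultiplicative_zeta.natCast hn
  rw [coe_mul_zeta_apply, prodPrimeFactors_apply hn.ne_zero,
    sum_congr rfl fun d hd => prodPrimeFactors_apply (Nat.pos_of_mem_divisors hd).ne'] at h
  rw [← h]
  refine prod_congr rfl fun p hp => ?_
  have hp' := Nat.prime_of_mem_primeFactors hp
  simp [prodPrimeFactors_apply hp'.ne_zero, hp'.primeFactors, hp'.ne_zero, add_comm]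

theorem one_sub_natCast_cpow_ne_zero {n : ℕ} (hn : 1 < n) {s : ℂ} (hs : s.re ≠ 0) :
    1 - (n : ℂ) ^ s ≠ 0 := by
  intro h
  have := norm_natCast_cpow_of_pos (by omega : 0 < n) s
  rw [← sub_eq_zero.mp h, norm_one, eq_comm] at this
  rw [← Real.rpow_zero (n : ℝ), Real.rpow_right_inj (by positivity) (by exact_mod_cast hn.ne')]
    at this
  exact hs this

theorem one_add_sq_mul_sq_div {K : Type*} [Field K] {a b : K} (ha : 1 - a ^ 2 ≠ 0)
    (hb : 1 - b ^ 2 ≠ 0) :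
    1 + (1 - a) ^ 2 * (1 - b) ^ 2 / ((1 - a ^ 2) * (1 - b ^ 2)) =
      2 * (1 + a * b) * ((1 - a) * (1 - b) / ((1 - a ^ 2) * (1 - b ^ 2))) := by
  field_simp
  ring

theorem one_add_local_factor_ratio {n : ℕ} (hn : 1 < n) (t : ℝ) :
    1 + (1 - (n : ℂ) ^ (-(1 : ℂ) / 2 - (t : ℂ) * I)) ^ 2 *
        (1 - (n : ℂ) ^ (-(1 : ℂ) / 2 + (t : ℂ) * I)) ^ 2 /
        ((1 - (n : ℂ) ^ (-(1 : ℂ) - 2 * (t : ℂ) * I)) *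
          (1 - (n : ℂ) ^ (-(1 : ℂ) + 2 * (t : ℂ) * I))) =
    2 * (1 + (n : ℂ)⁻¹) *
      ((1 - (n : ℂ) ^ (-(1 : ℂ) / 2 - (t : ℂ) * I)) *
        (1 - (n : ℂ) ^ (-(1 : ℂ) / 2 + (t : ℂ) * I)) /
        ((1 - (n : ℂ) ^ (-(1 : ℂ) - 2 * (t : ℂ) * I)) *
          (1 - (n : ℂ) ^ (-(1 : ℂ) + 2 * (t : ℂ) * I)))) := by
  have hn0 : (n : ℂ) ≠ 0 := by exact_mod_cast (zero_lt_one.trans hn).ne'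
  have hminus :
      (n : ℂ) ^ (-(1 : ℂ) - 2 * t * I) = ((n : ℂ) ^ (-(1 : ℂ) / 2 - t * I)) ^ 2 := by
    rw [sq, ← cpow_add _ _ hn0]; ring_nf
  have hplus :
      (n : ℂ) ^ (-(1 : ℂ) + 2 * t * I) = ((n : ℂ) ^ (-(1 : ℂ) / 2 + t * I)) ^ 2 := by
    rw [sq, ← cpow_add _ _ hn0]; ring_nf
  have hinv :
      (n : ℂ)⁻¹ =
        (n : ℂ) ^ (-(1 : ℂ) / 2 - t * I) * (n : ℂ) ^ (-(1 : ℂ) / 2 + t * I) := by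
    rw [← cpow_add _ _ hn0, ← cpow_neg_one]; ring_nf
  have hminus_ne := one_sub_natCast_cpow_ne_zero hn (s := -(1 : ℂ) - 2 * t * I) (by simp)
  have hplus_ne := one_sub_natCast_cpow_ne_zero hn (s := -(1 : ℂ) + 2 * t * I) (by simp)
  rw [hminus] at hminus_ne
  rw [hplus] at hplus_ne
  rw [hminus, hplus, hinv]
  exact one_add_sq_mul_sq_div hminus_ne hplus_ne

/-- For squarefree `q` and real `t`,
`∑_{ℓ ∣ q} ∏_{p ∣ ℓ} (1 − p^{-1/2-it})²(1 − p^{-1/2+it})² / ((1 − p^{-1-2it})(1 − p^{-1+2it}))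
  = 2^{ω q} · (ν q / q) ·
    ∏_{p ∣ q} (1 − p^{-1/2-it})(1 − p^{-1/2+it}) / ((1 − p^{-1-2it})(1 − p^{-1+2it}))`. -/
theorem stmt_3 (q : ℕ) (hq : Squarefree q) (t : ℝ) :
    ∑ ℓ ∈ q.divisors, ∏ p ∈ ℓ.primeFactors,
      ((1 - (p : ℂ) ^ (-(1 : ℂ) / 2 - (t : ℂ) * I)) ^ 2 *
        (1 - (p : ℂ) ^ (-(1 : ℂ) / 2 + (t : ℂ) * I)) ^ 2 /
        ((1 - (p : ℂ) ^ (-(1 : ℂ) - 2 * (t : ℂ) * I)) *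
          (1 - (p : ℂ) ^ (-(1 : ℂ) + 2 * (t : ℂ) * I)))) =
    2 ^ q.primeFactors.card *
      (((q : ℂ) * ∏ p ∈ q.primeFactors, (1 + (p : ℂ)⁻¹)) / (q : ℂ)) *
      ∏ p ∈ q.primeFactors,
        ((1 - (p : ℂ) ^ (-(1 : ℂ) / 2 - (t : ℂ) * I)) *
          (1 - (p : ℂ) ^ (-(1 : ℂ) / 2 + (t : ℂ) * I)) /
          ((1 - (p : ℂ) ^ (-(1 : ℂ) - 2 * (t : ℂ) * I)) *
            (1 - (p : ℂ) ^ (-(1 : ℂ) + 2 * (t : ℂ) * I)))) := by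
  have hq0 : (q : ℂ) ≠ 0 := by exact_mod_cast hq.ne_zero
  rw [mul_div_cancel_left₀ _ hq0, Nat.sum_divisors_prod_primeFactors hq, ← prod_const,
    ← prod_mul_distrib, ← prod_mul_distrib]
  exact prod_congr rfl fun p hp =>
    one_add_local_factor_ratio (Nat.prime_of_mem_primeFactors hp).one_lt t
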